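/- Define the bilinear product ξ • v_δ on series over X = {x₀,x₁} (with v_δ = (v_L, v_R) a pair of series) recursively by ∅ • v_δ = 0, (x₀ξ) • v_δ = x₀(ξ • v_δ), and (x₁ξ) • v_δ = x₁(v_L ⧢ ξ + ξ • v_δ) + x₀(v_R ⧢ ξ). Then • satisfies the derivation property over the shuffle product: (η ⧢ ξ) • v_δ = (η • v_δ) ⧢ ξ + η ⧢ (ξ • v_δ) for all words η, ξ. -/

import Mathlib

/-- Formal power series over the alphabet `X = {x₀, x₁}` (encoded as `Bool`,
with `x₀ = false` and `x₁ = true`). -/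
abbrev FPS := List Bool → ℝ

/-- The letter `x₀`. -/
def x₀ : Bool := false

/-- The letter `x₁`. -/
def x₁ : Bool := true

/-- Shuffle product of formal power series, via the left-quotient recursion. -/
noncomputable def shuffle : (List Bool → ℝ) → (List Bool → ℝ) → List Bool → ℝ
  | c, d, [] => c [] * d []
  | c, d, x :: w => shuffle (fun u => c (x :: u)) d w + shuffle c (fun u => d (x :: u)) w

/-- The series `1` (the empty word). -/
noncomputable def oneF : FPS := fun w => match w with | [] => 1 | _ => 0

/-- The series corresponding to a single word. -/
noncomputable def ind (η : List Bool) : FPS := fun w => if w = η then 1 else 0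

/-- Left catenation of the series `e` by a letter `x`: the series `x e`. -/
noncomputable def pre (x : Bool) (e : FPS) : FPS :=
  fun w => match w with
  | [] => 0
  | y :: u => if y = x then e u else 0

/-- The word-indexed family of endomorphisms `φ_d`, determined by
`φ_d(x₀)(e) = x₀ e` and `φ_d(x₁)(e) = x₁(d_L ⧢ e) + x₀(d_R ⧢ e)`. -/
noncomputable def phiW (d : FPS × FPS) : List Bool → FPS → FPS
  | [], e => e
  | x :: η, e =>
      if x then pre x₁ (shuffle d.1 (phiW d η e)) + pre x₀ (shuffle d.2 (phiW d η e))
      else pre x₀ (phiW d η e)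

/-- The mixed composition product `c ∘̃ d_δ = Σ_η (c,η) φ_d(η)(1)`.
(For each word `w` only the finitely many `η` with `|η| ≤ |w|` contribute.) -/
noncomputable def mixedComp (c : FPS) (d : FPS × FPS) : FPS :=
  fun w => ∑' η : List Bool, c η * phiW d η oneF w

/-- The product `ξ • v_δ` on words, for a pair `v_δ = (v_L, v_R)`:
`∅ • v = 0`, `(x₀ξ) • v = x₀(ξ • v)`, `(x₁ξ) • v = x₁(v_L ⧢ ξ + ξ • v) + x₀(v_R ⧢ ξ)`. -/
noncomputable def wordBullet : List Bool → FPS × FPS → FPS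
  | [], _ => 0
  | x :: ξ, v =>
      if x then pre x₁ (shuffle v.1 (ind ξ) + wordBullet ξ v) + pre x₀ (shuffle v.2 (ind ξ))
      else pre x₀ (wordBullet ξ v)

/-- Bilinear extension of `•` to series in the left argument. -/
noncomputable def seriesBullet (c : FPS) (v : FPS × FPS) : FPS :=
  fun w => ∑' ξ : List Bool, c ξ * wordBullet ξ v w


/-!
Write `η = xη'` and `ξ = yξ'`. The shuffle recursion `xa ⧢ yb = x(a ⧢ yb) + y(xa ⧢ b)` splits
`(η ⧢ ξ) • v` into two terms to which the induction hypotheses for `(η', ξ)` and `(η, ξ')` apply,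
provided the defining recursion of `•` on words, which computes `(xc) • v` from `c` and `c • v`,
also holds for arbitrary series `c`. It does, because `•` and `⧢` both commute with the
expansion `c = ∑_u c(u) u`, a sum that is finite at each word `w` since `(u • v)(w)` and
`(a ⧢ u)(w)` vanish for `|u| > |w|`. What remains is an identity in the commutative and
associative shuffle algebra.
-/

section Shuffle

variable (a b c : FPS)

theorem shuffle_nil : shuffle a b [] = a [] * b [] := rfl

theorem shuffle_cons (x : Bool) (w : List Bool) :
    shuffle a b (x :: w) =
      shuffle (fun u => a (x :: u)) b w + shuffle a (fun u => b (x :: u)) w := rfl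

theorem shuffle_comm : shuffle a b = shuffle b a := by
  funext w
  induction w generalizing a b with
  | nil => exact mul_comm _ _
  | cons x w ih =>
    rw [shuffle_cons, shuffle_cons, ih, ih a]
    exact add_comm _ _

theorem shuffle_zero_left : shuffle 0 c = 0 := by
  funext w
  induction w generalizing c with
  | nil => exact zero_mul _
  | cons x w ih =>
    rw [shuffle_cons]
    exact (congrArg₂ (· + ·) (ih _) (ih _)).trans (add_zero _)

theorem shuffle_zero_right : shuffle c 0 = 0 := by
  rw [shuffle_comm, shuffle_zero_left]

theorem shuffle_add_left : shuffle (a + b) c = shuffle a c + shuffle b c := by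
  funext w
  induction w generalizing a b c with
  | nil => exact add_mul _ _ _
  | cons x w ih =>
    change shuffle ((fun u => a (x :: u)) + fun u => b (x :: u)) c w + shuffle (a + b) _ w = _
    rw [ih, ih]
    simp only [Pi.add_apply, shuffle_cons]
    ring

theorem shuffle_add_right : shuffle c (a + b) = shuffle c a + shuffle c b := by
  rw [shuffle_comm, shuffle_add_left, shuffle_comm a, shuffle_comm b]

theorem shuffle_assoc : shuffle (shuffle a b) c = shuffle a (shuffle b c) := by
  funext w
  induction w generalizing a b c with
  | nil => exact mul_assoc _ _ _
  | cons x w ih =>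
    change shuffle (shuffle (fun u => a (x :: u)) b + shuffle a fun u => b (x :: u)) c w
        + shuffle (shuffle a b) _ w
      = shuffle _ (shuffle b c) w
        + shuffle a (shuffle (fun u => b (x :: u)) c + shuffle b fun u => c (x :: u)) w
    rw [shuffle_add_left, shuffle_add_right]
    simp only [Pi.add_apply, ih]
    ring

theorem shuffle_left_comm : shuffle a (shuffle b c) = shuffle b (shuffle a c) := by
  rw [← shuffle_assoc, shuffle_comm a, shuffle_assoc]

theorem ind_nil_quot (z : Bool) : (fun t => ind [] (z :: t)) = 0 :=
  funext fun _ => if_neg (List.cons_ne_nil _ _)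

theorem shuffle_one_left : shuffle (ind []) c = c := by
  funext w
  induction w generalizing c with
  | nil => exact one_mul _
  | cons x w ih =>
    rw [shuffle_cons, ind_nil_quot, shuffle_zero_left, ih]
    exact zero_add _

theorem shuffle_one_right : shuffle c (ind []) = c := by
  rw [shuffle_comm, shuffle_one_left]

end Shuffle

section Pre

variable (x : Bool) (e : FPS)

theorem pre_nil : pre x e [] = 0 := rfl

theorem pre_cons (y : Bool) (u : List Bool) : pre x e (y :: u) = if y = x then e u else 0 := rfl

theorem pre_add (f : FPS) : pre x (e + f) = pre x e + pre x f := by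
  funext w
  cases w with
  | nil => exact (add_zero (0 : ℝ)).symm
  | cons y u =>
    simp only [Pi.add_apply, pre_cons]
    split_ifs <;> simp

theorem pre_quot (z : Bool) : (fun t => pre x e (z :: t)) = if z = x then e else 0 := by
  funext t
  split_ifs <;> simp_all [pre_cons]

theorem ind_cons (η : List Bool) : ind (x :: η) = pre x (ind η) := by
  funext w
  cases w with
  | nil => rfl
  | cons y u => by_cases h : y = x <;> simp [ind, pre_cons, h]

theorem ind_quot_cons (z : Bool) (η : List Bool) :
    (fun t => ind (x :: η) (z :: t)) = if z = x then ind η else 0 := by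
  rw [ind_cons, pre_quot]

theorem shuffle_pre_pre (y : Bool) (f : FPS) :
    shuffle (pre x e) (pre y f) = pre x (shuffle e (pre y f)) + pre y (shuffle (pre x e) f) := by
  funext w
  cases w with
  | nil => simp [shuffle_nil, pre_nil]
  | cons z u =>
    rw [shuffle_cons, pre_quot, pre_quot]
    simp only [Pi.add_apply, pre_cons]
    split_ifs <;> simp [shuffle_zero_left, shuffle_zero_right]

theorem shuffle_ind_cons_cons (y : Bool) (η ξ : List Bool) :
    shuffle (ind (x :: η)) (ind (y :: ξ)) =
      pre x (shuffle (ind η) (ind (y :: ξ))) + pre y (shuffle (ind (x :: η)) (ind ξ)) := by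
  rw [ind_cons x, ind_cons y, shuffle_pre_pre]

end Pre

theorem shuffle_ind_eq_zero_of_length_lt (a : FPS) :
    ∀ {u w : List Bool}, w.length < u.length → shuffle a (ind u) w = 0
  | [], _, h => absurd h (Nat.not_lt_zero _)
  | _ :: _, [], _ => mul_eq_zero_of_right _ (if_neg (List.cons_ne_nil _ _).symm)
  | y :: u, z :: w, h => by
    have hu : w.length < u.length := Nat.lt_of_succ_lt_succ h
    rw [shuffle_cons, shuffle_ind_eq_zero_of_length_lt _ (Nat.lt_of_succ_lt h), ind_quot_cons]
    split_ifs
    · rw [shuffle_ind_eq_zero_of_length_lt a hu, add_zero]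
    · rw [shuffle_zero_right, Pi.zero_apply, add_zero]

theorem summable_of_eq_zero_of_length_lt {α M : Type*} [Finite α] [AddCommMonoid M]
    [TopologicalSpace M] {f : List α → M} (n : ℕ) (hf : ∀ u, n < u.length → f u = 0) :
    Summable f :=
  summable_of_hasFiniteSupport <| (List.finite_length_le α n).subset fun u hu =>
    not_lt.mp fun h => hu (hf u h)

/-- `g = ∑_u c(u) f(u)`, the sum converging at every word. -/
def HasWordSum (c : FPS) (f : List Bool → FPS) (g : FPS) : Prop :=
  ∀ w, HasSum (fun u => c u * f u w) (g w)

namespace HasWordSum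

variable {c d g g' : FPS} {f f' : List Bool → FPS}

theorem unique (h : HasWordSum c f g) (h' : HasWordSum c f g') : g = g' :=
  funext fun w => (h w).unique (h' w)

theorem add_left (h : HasWordSum c f g) (h' : HasWordSum d f g') :
    HasWordSum (c + d) f (g + g') := fun w => by
  simpa only [Pi.add_apply, add_mul] using (h w).add (h' w)

theorem add_right (h : HasWordSum c f g) (h' : HasWordSum c f' g') :
    HasWordSum c (fun u => f u + f' u) (g + g') := fun w => by
  simpa only [Pi.add_apply, mul_add] using (h w).add (h' w)

theorem pre (x : Bool) (h : HasWordSum c f g) :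
    HasWordSum c (fun u => pre x (f u)) (pre x g)
  | [] => by simpa only [pre_nil, mul_zero] using hasSum_zero
  | z :: w => by
    simp only [pre_cons]
    split_ifs
    · exact h w
    · simpa only [mul_zero] using hasSum_zero

end HasWordSum

theorem hasWordSum_ind (ζ : List Bool) (f : List Bool → FPS) : HasWordSum (ind ζ) f (f ζ) :=
  fun w => by
    simpa [ind] using hasSum_single (f := fun u => ind ζ u * f u w) ζ fun u hu => by simp [ind, hu]

theorem hasWordSum_pre_iff {c g : FPS} {f : List Bool → FPS} (x : Bool) :
    HasWordSum (pre x c) f g ↔ HasWordSum c (fun u => f (x :: u)) g := by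
  refine forall_congr' fun w => ?_
  rw [← List.cons_injective.hasSum_iff (g := List.cons x) (f := fun u => pre x c u * f u w)]
  · simp [Function.comp_def, pre_cons]
  · rintro (_ | ⟨y, u⟩) hu
    · exact zero_mul _
    · rw [pre_cons, if_neg (by rintro rfl; exact hu ⟨u, rfl⟩), zero_mul]

theorem hasWordSum_shuffle (a c : FPS) :
    HasWordSum c (fun u => shuffle a (ind u)) (shuffle a c) := by
  intro w
  induction w generalizing a c with
  | nil =>
    simpa [shuffle_nil, ind, mul_comm] using
      hasSum_single (f := fun u => c u * (a [] * ind u [])) [] fun u hu => by simp [ind, hu]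
  | cons z w ih =>
    have hquot : HasSum (fun u => c u * shuffle a (fun t => ind u (z :: t)) w)
        (shuffle a (fun t => c (z :: t)) w) := by
      rw [← List.cons_injective.hasSum_iff (g := List.cons z)]
      · simpa [Function.comp_def, ind_quot_cons] using ih a (fun t => c (z :: t))
      · rintro (_ | ⟨y, u⟩) hu
        · rw [ind_nil_quot, shuffle_zero_right, Pi.zero_apply, mul_zero]
        · rw [ind_quot_cons, if_neg (by rintro rfl; exact hu ⟨u, rfl⟩), shuffle_zero_right,
            Pi.zero_apply, mul_zero]
    simpa only [shuffle_cons, mul_add] using (ih _ c).add hquot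

/-- The right-hand side of the recursion for `(x c) • v`, in terms of `c` and `b = c • v`. -/
noncomputable def consBullet (v : FPS × FPS) (x : Bool) (c b : FPS) : FPS :=
  if x then pre x₁ (shuffle v.1 c + b) + pre x₀ (shuffle v.2 c) else pre x₀ b

theorem HasWordSum.consBullet {c b : FPS} {f : List Bool → FPS} (v : FPS × FPS) (x : Bool)
    (h : HasWordSum c f b) :
    HasWordSum c (fun u => consBullet v x (ind u) (f u)) (consBullet v x c b) := by
  cases x
  · exact h.pre x₀
  · exact (((hasWordSum_shuffle v.1 c).add_right h).pre x₁).add_right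
      ((hasWordSum_shuffle v.2 c).pre x₀)

section Bullet

variable (v : FPS × FPS)

theorem wordBullet_nil : wordBullet [] v = 0 := rfl

theorem wordBullet_cons (x : Bool) (ξ : List Bool) :
    wordBullet (x :: ξ) v = consBullet v x (ind ξ) (wordBullet ξ v) := rfl

theorem wordBullet_eq_zero_of_length_lt :
    ∀ {ζ w : List Bool}, w.length < ζ.length → wordBullet ζ v w = 0
  | [], _, h => absurd h (Nat.not_lt_zero _)
  | x :: _, [], _ => by cases x <;> simp [wordBullet_cons, consBullet, pre_nil]
  | x :: _, _ :: _, h => by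
    have h' := Nat.lt_of_succ_lt_succ h
    cases x <;> simp [wordBullet_cons, consBullet, pre_cons,
      shuffle_ind_eq_zero_of_length_lt _ h', wordBullet_eq_zero_of_length_lt h']

theorem hasWordSum_seriesBullet (c : FPS) :
    HasWordSum c (fun u => wordBullet u v) (seriesBullet c v) := fun w =>
  (summable_of_eq_zero_of_length_lt w.length fun _ hu =>
    mul_eq_zero_of_right _ (wordBullet_eq_zero_of_length_lt v hu)).hasSum

theorem seriesBullet_add (c d : FPS) :
    seriesBullet (c + d) v = seriesBullet c v + seriesBullet d v :=
  (hasWordSum_seriesBullet v _).unique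
    ((hasWordSum_seriesBullet v c).add_left (hasWordSum_seriesBullet v d))

theorem seriesBullet_ind (ζ : List Bool) : seriesBullet (ind ζ) v = wordBullet ζ v :=
  (hasWordSum_seriesBullet v _).unique (hasWordSum_ind ζ _)

theorem seriesBullet_pre (x : Bool) (c : FPS) :
    seriesBullet (pre x c) v = consBullet v x c (seriesBullet c v) :=
  (hasWordSum_seriesBullet v _).unique <| (hasWordSum_pre_iff x).mpr <| by
    simpa only [wordBullet_cons] using (hasWordSum_seriesBullet v c).consBullet v x

/-- With `A = a • v` and `B = b • v`: the derivation law for `(xa, yb)` follows from the laws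
for `(a, yb)` and `(xa, b)`. -/
theorem consBullet_leibniz (x y : Bool) (a b A B : FPS) :
    consBullet v x (shuffle a (pre y b)) (shuffle A (pre y b) + shuffle a (consBullet v y b B))
      + consBullet v y (shuffle (pre x a) b) (shuffle (consBullet v x a A) b + shuffle (pre x a) B)
      = shuffle (consBullet v x a A) (pre y b) + shuffle (pre x a) (consBullet v y b B) := by
  cases x <;> cases y <;>
    simp only [consBullet, x₀, x₁, Bool.false_eq_true, if_true, if_false, shuffle_add_left,
      shuffle_add_right, pre_add, shuffle_pre_pre] <;>
    simp only [shuffle_comm, shuffle_left_comm] <;>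
    abel

end Bullet

/-- The product `•` is a derivation for the shuffle product:
`(η ⧢ ξ) • v = (η • v) ⧢ ξ + η ⧢ (ξ • v)` for all words `η, ξ`. -/
theorem bullet_shuffle_derivation (η ξ : List Bool) (v : FPS × FPS) :
    seriesBullet (shuffle (ind η) (ind ξ)) v =
      shuffle (wordBullet η v) (ind ξ) + shuffle (ind η) (wordBullet ξ v) := by
  induction η generalizing ξ with
  | nil =>
    rw [shuffle_one_left, seriesBullet_ind, wordBullet_nil, shuffle_zero_left, shuffle_one_left,
      zero_add]
  | cons x η ihη =>
    induction ξ with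
    | nil =>
      rw [shuffle_one_right, seriesBullet_ind, wordBullet_nil, shuffle_zero_right,
        shuffle_one_right, add_zero]
    | cons y ξ ihξ =>
      rw [shuffle_ind_cons_cons, seriesBullet_add, seriesBullet_pre, seriesBullet_pre, ihη, ihξ,
        wordBullet_cons, wordBullet_cons, ind_cons x, ind_cons y]
      exact consBullet_leibniz v x y _ _ _ _
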